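/- Let η ∈ C_c^∞(ℝⁿ) be nonnegative with ∫η = 1, such that -η is vain (i.e. η(x̄) = η(x) and ∂₁η(x) ≥ 0 for x¹ < 0). If u : ℝⁿ → ℝ is vain, bounded and measurable, then the mollification u_ε(x₀) := ∫ u(x) η_ε(x₀ - x) dx, with η_ε(x) := ε^{-n} η(x/ε), is vain. -/

import Mathlib

open MeasureTheory

noncomputable section

def scale1 {n : ℕ} (lam : ℝ) (x : Fin (n+1) → ℝ) : Fin (n+1) → ℝ :=
  Function.update x 0 (lam * x 0)

/-- Vain function on all of `ℝⁿ`. -/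
def VainR {n : ℕ} (u : (Fin (n+1) → ℝ) → ℝ) : Prop :=
  ∀ x, ∀ lam ∈ Set.Icc (-1 : ℝ) 1, u (scale1 lam x) ≤ u x

section helpers

variable {n : ℕ}

private lemma upd_sub' (z x : Fin (n+1) → ℝ) (a : ℝ) :
    Function.update z 0 a - x = Function.update (z - x) 0 (a - x 0) := by
  funext i; by_cases h : i = 0 <;> simp [Function.update_apply, h]

private lemma upd_smul (c : ℝ) (y : Fin (n+1) → ℝ) (a : ℝ) :
    c • Function.update y 0 a = Function.update (c • y) 0 (c * a) := by
  funext i; by_cases h : i = 0 <;> simp [Function.update_apply, h]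

private lemma vain_upd {u : (Fin (n+1) → ℝ) → ℝ} (hu : VainR u) (x : Fin (n+1) → ℝ)
    {a : ℝ} (ha : |a| ≤ |x 0|) : u (Function.update x 0 a) ≤ u x := by
  rcases eq_or_ne (x 0) 0 with h0 | h0
  · have ha0 : a = 0 := by
      rw [h0, abs_zero] at ha
      exact abs_eq_zero.1 (le_antisymm ha (abs_nonneg a))
    rw [ha0, ← h0, Function.update_eq_self]
  · have h1 : |a / x 0| ≤ 1 := by
      rw [abs_div]
      exact div_le_one_of_le₀ ha (abs_nonneg _)
    have h2 := hu x (a / x 0) (abs_le.1 h1)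
    rwa [scale1, div_mul_cancel₀ a h0] at h2

private lemma vain_symm {u : (Fin (n+1) → ℝ) → ℝ} (hu : VainR u) (x : Fin (n+1) → ℝ) :
    u (Function.update x 0 (-(x 0))) = u x := by
  have e1 : scale1 (-1) x = Function.update x 0 (-(x 0)) := by
    simp [scale1]
  have e2 : scale1 (-1) (scale1 (-1) x) = x := by
    funext i
    by_cases h : i = 0 <;> simp [scale1, Function.update_apply, h]
  have h1 := hu x (-1) (by norm_num)
  have h2 := hu (scale1 (-1) x) (-1) (by norm_num)
  rw [e2, e1] at h2
  rw [e1] at h1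
  exact le_antisymm h1 h2

private lemma eta_upd_neg {η : (Fin (n+1) → ℝ) → ℝ} (hsymm : ∀ x, η (scale1 (-1) x) = η x)
    (y : Fin (n+1) → ℝ) (a : ℝ) :
    η (Function.update y 0 (-a)) = η (Function.update y 0 a) := by
  have e : scale1 (-1) (Function.update y 0 a) = Function.update y 0 (-a) := by
    funext i; by_cases h : i = 0 <;> simp [scale1, Function.update_apply, h]
  have := hsymm (Function.update y 0 a)
  rwa [e] at this

private lemma eta_anti {η : (Fin (n+1) → ℝ) → ℝ} (hsmooth : ContDiff ℝ (⊤ : ℕ∞) η)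
    (hsymm : ∀ x, η (scale1 (-1) x) = η x)
    (hmono : ∀ x : Fin (n+1) → ℝ, x 0 < 0 → 0 ≤ fderiv ℝ η x (Pi.single 0 1))
    (y : Fin (n+1) → ℝ) {a b : ℝ} (hab : |a| ≤ |b|) :
    η (Function.update y 0 b) ≤ η (Function.update y 0 a) := by
  have habs : ∀ c : ℝ, η (Function.update y 0 c) = η (Function.update y 0 |c|) := by
    intro c
    rcases abs_choice c with h | h
    · rw [h]
    · rw [h]; exact (eta_upd_neg hsymm y c).symm
  rw [habs a, habs b]
  set φ : ℝ → ℝ := fun t => η (Function.update y 0 t) with hφ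
  have hLe : (fun t : ℝ => Function.update y 0 t)
      = fun t : ℝ => Function.update y 0 0 + t • (Pi.single 0 1 : Fin (n+1) → ℝ) := by
    funext t i
    by_cases h : i = 0 <;> simp [Function.update_apply, h, Pi.single_apply]
  have hL : ∀ t : ℝ, HasDerivAt φ (fderiv ℝ η (Function.update y 0 t) (Pi.single 0 1)) t := by
    intro t
    have hLd : HasDerivAt (fun t : ℝ => Function.update y 0 t)
        (Pi.single 0 1 : Fin (n+1) → ℝ) t := by
      rw [hLe]
      simpa using ((hasDerivAt_id t).smul_const
        (Pi.single 0 1 : Fin (n+1) → ℝ)).const_add (Function.update y 0 0)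
    exact ((hsmooth.differentiable (by simp)).differentiableAt.hasFDerivAt).comp_hasDerivAt t hLd
  have hLc : Continuous fun t : ℝ => Function.update y 0 t := by
    rw [hLe]
    exact continuous_const.add (continuous_id.smul continuous_const)
  have hφc : Continuous φ := hsmooth.continuous.comp hLc
  have hmon : MonotoneOn φ (Set.Iic (0:ℝ)) := by
    apply monotoneOn_of_deriv_nonneg (convex_Iic 0) hφc.continuousOn
    · intro t _
      exact (hL t).differentiableAt.differentiableWithinAt
    · intro t ht
      rw [interior_Iic] at ht
      rw [(hL t).deriv]
      apply hmono
      simpa using ht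
  have h1 : φ (-|b|) ≤ φ (-|a|) := by
    apply hmon (by simp : -|b| ∈ Set.Iic (0:ℝ)) (by simp : -|a| ∈ Set.Iic (0:ℝ))
    simpa using hab
  rw [hφ] at h1
  simp only at h1
  rwa [eta_upd_neg hsymm, eta_upd_neg hsymm] at h1

private def Tmap (c : ℝ) (x : Fin (n+1) → ℝ) : Fin (n+1) → ℝ :=
  Function.update x 0 (c - x 0)

private lemma Tmap_invol (c : ℝ) (x : Fin (n+1) → ℝ) : Tmap c (Tmap c x) = x := by
  funext i; by_cases h : i = 0 <;> simp [Tmap, Function.update_apply, h]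

private lemma upd_sub_T (z x : Fin (n+1) → ℝ) (a c : ℝ) :
    Function.update z 0 a - Tmap c x = Function.update (z - x) 0 (a - (c - x 0)) := by
  funext i; by_cases h : i = 0 <;> simp [Tmap, Function.update_apply, h]

private lemma Tmap_mp (c : ℝ) :
    MeasurePreserving (Tmap (n := n) c) volume volume := by
  have h : MeasurePreserving
      (fun (x : Fin (n+1) → ℝ) i => (if i = 0 then (fun a : ℝ => c - a) else id) (x i))
      volume volume := by
    apply volume_preserving_pi
    intro i
    by_cases h : i = 0
    · simp only [h, if_pos]
      exact Measure.measurePreserving_sub_left volume c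
    · simp only [h, if_neg, if_false]
      exact MeasurePreserving.id _
  have e : (fun (x : Fin (n+1) → ℝ) i => (if i = 0 then (fun a : ℝ => c - a) else id) (x i))
      = Tmap (n := n) c := by
    funext x i
    by_cases h : i = 0 <;> simp [Tmap, Function.update_apply, h]
  rwa [e] at h

private def Tequiv (c : ℝ) : (Fin (n+1) → ℝ) ≃ᵐ (Fin (n+1) → ℝ) where
  toFun := Tmap c
  invFun := Tmap c
  left_inv := Tmap_invol c
  right_inv := Tmap_invol c
  measurable_toFun := (Tmap_mp c).measurable
  measurable_invFun := (Tmap_mp c).measurable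

private lemma hyperplane_null (m : ℝ) :
    volume {x : Fin (n+1) → ℝ | x 0 = m} = 0 := by
  have e : {x : Fin (n+1) → ℝ | x 0 = m}
      = Set.pi Set.univ (fun i => if i = 0 then ({m} : Set ℝ) else Set.univ) := by
    ext x
    simp only [Set.mem_setOf_eq, Set.mem_pi, Set.mem_univ, forall_true_left]
    constructor
    · intro h i
      by_cases hi : i = 0 <;> simp [hi, h]
    · intro h
      have := h 0
      simpa using this
  rw [e, volume_pi, Measure.pi_pi]
  exact Finset.prod_eq_zero (Finset.mem_univ 0) (by simp)

private lemma integrand_integrable {η u : (Fin (n+1) → ℝ) → ℝ} (hηc : Continuous η)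
    (hcpt : HasCompactSupport η) (hmeas : Measurable u) (hbdd : ∃ C, ∀ x, |u x| ≤ C)
    {ε : ℝ} (hε : 0 < ε) (z : Fin (n+1) → ℝ) :
    Integrable (fun x => u x * ((ε ^ (n+1))⁻¹ * η (ε⁻¹ • (z - x)))) := by
  obtain ⟨C, hC⟩ := hbdd
  let ψ : (Fin (n+1) → ℝ) ≃ₜ (Fin (n+1) → ℝ) :=
    (Homeomorph.subLeft z).trans (Homeomorph.smulOfNeZero (ε⁻¹) (inv_ne_zero hε.ne'))
  have hψ : ∀ x, ψ x = ε⁻¹ • (z - x) := fun x => rfl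
  have h1 : HasCompactSupport fun x : Fin (n+1) → ℝ => η (ε⁻¹ • (z - x)) := by
    have := hcpt.comp_homeomorph ψ
    exact this
  have hcont : Continuous fun x : Fin (n+1) → ℝ => η (ε⁻¹ • (z - x)) :=
    hηc.comp (by continuity)
  have hint : Integrable (fun x : Fin (n+1) → ℝ => (ε ^ (n+1))⁻¹ * η (ε⁻¹ • (z - x))) volume :=
    (hcont.integrable_of_hasCompactSupport h1).const_mul _
  exact hint.bdd_mul hmeas.aestronglyMeasurable
    (Filter.Eventually.of_forall fun x => by simpa [Real.norm_eq_abs] using hC x)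

private lemma K_neg {η : (Fin (n+1) → ℝ) → ℝ} (hsymm : ∀ x, η (scale1 (-1) x) = η x)
    {ε : ℝ} (y : Fin (n+1) → ℝ) (a : ℝ) :
    (ε ^ (n+1))⁻¹ * η (ε⁻¹ • Function.update y 0 (-a))
      = (ε ^ (n+1))⁻¹ * η (ε⁻¹ • Function.update y 0 a) := by
  rw [upd_smul, upd_smul, mul_neg, eta_upd_neg hsymm]

private lemma K_anti {η : (Fin (n+1) → ℝ) → ℝ} (hsmooth : ContDiff ℝ (⊤ : ℕ∞) η)
    (hsymm : ∀ x, η (scale1 (-1) x) = η x)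
    (hmono : ∀ x : Fin (n+1) → ℝ, x 0 < 0 → 0 ≤ fderiv ℝ η x (Pi.single 0 1))
    {ε : ℝ} (hε : 0 < ε) (y : Fin (n+1) → ℝ) {a b : ℝ} (hab : |a| ≤ |b|) :
    (ε ^ (n+1))⁻¹ * η (ε⁻¹ • Function.update y 0 b)
      ≤ (ε ^ (n+1))⁻¹ * η (ε⁻¹ • Function.update y 0 a) := by
  rw [upd_smul, upd_smul]
  refine mul_le_mul_of_nonneg_left ?_ (by positivity)
  exact eta_anti hsmooth hsymm hmono _
    (by rw [abs_mul, abs_mul]; exact mul_le_mul_of_nonneg_left hab (abs_nonneg _))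

private lemma moll_symm {η u : (Fin (n+1) → ℝ) → ℝ}
    (hsymm : ∀ x, η (scale1 (-1) x) = η x) (hu : VainR u)
    {ε : ℝ} (z : Fin (n+1) → ℝ) :
    ∫ x, u x * ((ε ^ (n+1))⁻¹ * η (ε⁻¹ • (scale1 (-1) z - x)))
      = ∫ x, u x * ((ε ^ (n+1))⁻¹ * η (ε⁻¹ • (z - x))) := by
  rw [← (Tmap_mp (n := n) 0).integral_comp (Tequiv 0).measurableEmbedding
      (fun x => u x * ((ε ^ (n+1))⁻¹ * η (ε⁻¹ • (z - x))))]
  refine integral_congr_ae (Filter.Eventually.of_forall fun x => ?_)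
  dsimp only
  have hu' : u (Tmap (n := n) 0 x) = u x := by
    have e : Tmap (n := n) 0 x = Function.update x 0 (-(x 0)) := by
      unfold Tmap
      rw [zero_sub]
    rw [e, vain_symm hu]
  have hz : z - Tmap (n := n) 0 x = Function.update (z - x) 0 (z 0 + x 0) := by
    conv_lhs => rw [← Function.update_eq_self 0 z]
    rw [upd_sub_T, show z 0 - (0 - x 0) = z 0 + x 0 from by ring]
  have hz' : scale1 (-1) z - x = Function.update (z - x) 0 (-(z 0 + x 0)) := by
    rw [scale1, upd_sub', show -1 * z 0 - x 0 = -(z 0 + x 0) from by ring]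
  rw [hz', hu', hz, K_neg hsymm]

private lemma moll_mono {η u : (Fin (n+1) → ℝ) → ℝ} (hsmooth : ContDiff ℝ (⊤ : ℕ∞) η)
    (hcpt : HasCompactSupport η)
    (hsymm : ∀ x, η (scale1 (-1) x) = η x)
    (hmono : ∀ x : Fin (n+1) → ℝ, x 0 < 0 → 0 ≤ fderiv ℝ η x (Pi.single 0 1))
    (hu : VainR u) (hmeas : Measurable u) (hbdd : ∃ C, ∀ x, |u x| ≤ C)
    {ε : ℝ} (hε : 0 < ε) (z : Fin (n+1) → ℝ) {s t : ℝ} (hs : 0 ≤ s) (hst : s ≤ t) :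
    ∫ x, u x * ((ε ^ (n+1))⁻¹ * η (ε⁻¹ • (Function.update z 0 s - x)))
      ≤ ∫ x, u x * ((ε ^ (n+1))⁻¹ * η (ε⁻¹ • (Function.update z 0 t - x))) := by
  have hIt := integrand_integrable hsmooth.continuous hcpt hmeas hbdd hε (Function.update z 0 t)
  have hIs := integrand_integrable hsmooth.continuous hcpt hmeas hbdd hε (Function.update z 0 s)
  rw [← sub_nonneg, ← integral_sub hIt hIs]
  set c : ℝ := s + t with hc
  set F : (Fin (n+1) → ℝ) → ℝ := fun x =>
    u x * ((ε ^ (n+1))⁻¹ * η (ε⁻¹ • (Function.update z 0 t - x)))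
      - u x * ((ε ^ (n+1))⁻¹ * η (ε⁻¹ • (Function.update z 0 s - x))) with hF
  have hFint : Integrable F := hIt.sub hIs
  set A : Set (Fin (n+1) → ℝ) := {x | c/2 < x 0} with hA
  have hAm : MeasurableSet A := measurableSet_lt measurable_const (measurable_pi_apply 0)
  rw [← integral_add_compl hAm hFint]
  have key : ∫ x in Aᶜ, F x = ∫ x in A, F (Tmap c x) := by
    have h1 : (Tmap (n := n) c) ⁻¹' Aᶜ = {x : Fin (n+1) → ℝ | c/2 ≤ x 0} := by
      ext x
      simp only [Set.mem_preimage, Set.mem_compl_iff, hA, Set.mem_setOf_eq, not_lt, Tmap,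
        Function.update_self]
      constructor <;> intro h <;> linarith
    rw [← (Tmap_mp (n := n) c).setIntegral_preimage_emb (Tequiv c).measurableEmbedding F Aᶜ, h1]
    apply setIntegral_congr_set
    rw [Filter.eventuallyEq_set, MeasureTheory.ae_iff]
    refine measure_mono_null ?_ (hyperplane_null (n := n) (c/2))
    intro x hx
    simp only [Set.mem_setOf_eq, hA] at hx ⊢
    by_contra hne
    apply hx
    constructor
    · intro h'
      exact lt_of_le_of_ne h' (Ne.symm hne)
    · exact le_of_lt
  rw [key]
  have hFT : Integrable (fun x => F (Tmap c x)) volume := by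
    have := ((Tmap_mp (n := n) c).integrable_comp_emb (Tequiv c).measurableEmbedding
      (g := F)).2 hFint
    exact this
  rw [← integral_add hFint.integrableOn hFT.integrableOn]
  apply setIntegral_nonneg hAm
  intro x hx
  have hx0 : c/2 < x 0 := hx
  have hx0' : (0:ℝ) ≤ x 0 := by
    have : 0 ≤ c := by linarith
    linarith
  have e1 : Function.update z 0 t - x = Function.update (z - x) 0 (t - x 0) := by
    conv_lhs => rw [← Function.update_eq_self 0 x]
    rw [show Function.update z 0 t - Function.update x 0 (x 0)
        = Function.update z 0 t - x from by rw [Function.update_eq_self]]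
    exact upd_sub' z x t
  have e2 : Function.update z 0 s - x = Function.update (z - x) 0 (s - x 0) := upd_sub' z x s
  have e3 : Function.update z 0 t - Tmap c x = Function.update (z - x) 0 (x 0 - s) := by
    rw [upd_sub_T, show t - (c - x 0) = x 0 - s from by rw [hc]; ring]
  have e4 : Function.update z 0 s - Tmap c x = Function.update (z - x) 0 (x 0 - t) := by
    rw [upd_sub_T, show s - (c - x 0) = x 0 - t from by rw [hc]; ring]
  have k3 : (ε ^ (n+1))⁻¹ * η (ε⁻¹ • Function.update (z - x) 0 (x 0 - s))
      = (ε ^ (n+1))⁻¹ * η (ε⁻¹ • Function.update (z - x) 0 (s - x 0)) := by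
    rw [← neg_sub s (x 0)]
    exact K_neg hsymm _ _
  have k4 : (ε ^ (n+1))⁻¹ * η (ε⁻¹ • Function.update (z - x) 0 (x 0 - t))
      = (ε ^ (n+1))⁻¹ * η (ε⁻¹ • Function.update (z - x) 0 (t - x 0)) := by
    rw [← neg_sub t (x 0)]
    exact K_neg hsymm _ _
  have huT : u (Tmap c x) ≤ u x := by
    have h1 : |c - x 0| ≤ |x 0| := by
      rw [abs_of_nonneg hx0']
      exact abs_le.mpr ⟨by linarith, by linarith⟩
    exact vain_upd hu x h1
  have hKle : (ε ^ (n+1))⁻¹ * η (ε⁻¹ • Function.update (z - x) 0 (s - x 0))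
      ≤ (ε ^ (n+1))⁻¹ * η (ε⁻¹ • Function.update (z - x) 0 (t - x 0)) := by
    apply K_anti hsmooth hsymm hmono hε
    rw [abs_of_nonpos (by linarith : s - x 0 ≤ 0)]
    exact abs_le.mpr ⟨by linarith, by linarith⟩
  simp only [hF, e1, e2, e3, e4, k3, k4]
  have : u x * ((ε ^ (n+1))⁻¹ * η (ε⁻¹ • Function.update (z - x) 0 (t - x 0)))
      - u x * ((ε ^ (n+1))⁻¹ * η (ε⁻¹ • Function.update (z - x) 0 (s - x 0)))
      + (u (Tmap c x) * ((ε ^ (n+1))⁻¹ * η (ε⁻¹ • Function.update (z - x) 0 (s - x 0)))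
      - u (Tmap c x) * ((ε ^ (n+1))⁻¹ * η (ε⁻¹ • Function.update (z - x) 0 (t - x 0))))
      = (u x - u (Tmap c x)) * (((ε ^ (n+1))⁻¹ * η (ε⁻¹ • Function.update (z - x) 0 (t - x 0)))
        - ((ε ^ (n+1))⁻¹ * η (ε⁻¹ • Function.update (z - x) 0 (s - x 0)))) := by ring
  rw [this]
  exact mul_nonneg (sub_nonneg.2 huT) (sub_nonneg.2 hKle)

end helpers

theorem mollification_vain {n : ℕ} (η : (Fin (n+1) → ℝ) → ℝ)
    (hsmooth : ContDiff ℝ (⊤ : ℕ∞) η) (hcpt : HasCompactSupport η)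
    (hnonneg : ∀ x, 0 ≤ η x) (hint : ∫ x, η x = 1)
    (hsymm : ∀ x, η (scale1 (-1) x) = η x)
    (hmono : ∀ x : Fin (n+1) → ℝ, x 0 < 0 → 0 ≤ fderiv ℝ η x (Pi.single 0 1))
    (u : (Fin (n+1) → ℝ) → ℝ) (hu : VainR u) (hmeas : Measurable u)
    (hbdd : ∃ C, ∀ x, |u x| ≤ C)
    (ε : ℝ) (hε : 0 < ε) :
    VainR (fun x₀ => ∫ x, u x * ((ε ^ (n+1))⁻¹ * η (ε⁻¹ • (x₀ - x)))) := by
  intro x₀ lam hlam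
  dsimp only
  have Iabs : ∀ (w : Fin (n+1) → ℝ) {a b : ℝ}, |a| ≤ |b| →
      ∫ x, u x * ((ε ^ (n+1))⁻¹ * η (ε⁻¹ • (Function.update w 0 a - x)))
        ≤ ∫ x, u x * ((ε ^ (n+1))⁻¹ * η (ε⁻¹ • (Function.update w 0 b - x))) := by
    intro w a b hab
    have habs : ∀ cc : ℝ,
        ∫ x, u x * ((ε ^ (n+1))⁻¹ * η (ε⁻¹ • (Function.update w 0 cc - x)))
          = ∫ x, u x * ((ε ^ (n+1))⁻¹ * η (ε⁻¹ • (Function.update w 0 |cc| - x))) := by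
      intro cc
      rcases abs_choice cc with h | h
      · rw [h]
      · have e : scale1 (-1) (Function.update w 0 (-cc)) = Function.update w 0 cc := by
          funext i
          by_cases hi : i = 0 <;> simp [scale1, Function.update_apply, hi]
        rw [h, ← e, moll_symm hsymm hu]
    rw [habs a, habs b]
    exact moll_mono hsmooth hcpt hsymm hmono hu hmeas hbdd hε w (abs_nonneg a) hab
  have e0 : scale1 lam x₀ = Function.update x₀ 0 (lam * x₀ 0) := rfl
  have e1 : x₀ = Function.update x₀ 0 (x₀ 0) := (Function.update_eq_self 0 x₀).symm
  rw [e0]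
  conv_rhs => rw [e1]
  apply Iabs
  rw [abs_mul]
  calc |lam| * |x₀ 0| ≤ 1 * |x₀ 0| :=
        mul_le_mul_of_nonneg_right (abs_le.mpr ⟨hlam.1, hlam.2⟩) (abs_nonneg _)
    _ = |x₀ 0| := one_mul _
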